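/- If φ is a holomorphic self-map of the unit disk such that the composition operator C_φ f = f∘φ is an isometry from H^∞(𝔻) into the Bloch space 𝓑(𝔻), then φ(0) = 0. -/

import Mathlib

open Metric Filter

/-- The open unit disk in ℂ. -/
noncomputable def unitDisk : Set ℂ := Metric.ball 0 1

/-- Supremum norm over the unit disk. -/
noncomputable def supNorm (f : ℂ → ℂ) : ℝ :=
  sSup ((fun z => ‖f z‖) '' unitDisk)

/-- Bloch seminorm over the unit disk. -/
noncomputable def blochSemi (g : ℂ → ℂ) : ℝ :=
  sSup ((fun z => (1 - ‖z‖ ^ 2) * ‖deriv g z‖) '' unitDisk)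

/-- Bloch norm over the unit disk. -/
noncomputable def blochNorm (g : ℂ → ℂ) : ℝ :=
  ‖g 0‖ + blochSemi g

/-!
Testing the isometry on the affine maps `z`, `1 + z` and `1 - z`, whose sup norms are `1`, `2`, `2`
and whose compositions with `φ` have Bloch norms `‖a‖ + S`, `‖1 + a‖ + S`, `‖1 - a‖ + S`
(with `a = φ 0` and `S` the Bloch seminorm of `φ`), gives `‖1 + a‖ = ‖1 - a‖ = 1 + ‖a‖`.
The parallelogram law `‖1 + a‖² + ‖1 - a‖² = 2 (1 + ‖a‖²)` then forces `‖a‖ = 0`.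
-/

lemma mem_unitDisk {z : ℂ} : z ∈ unitDisk ↔ ‖z‖ < 1 := mem_ball_zero_iff

lemma norm_le_supNorm {f : ℂ → ℂ} (hf : BddAbove ((fun z => ‖f z‖) '' unitDisk)) {z : ℂ}
    (hz : z ∈ unitDisk) : ‖f z‖ ≤ supNorm f :=
  le_csSup hf ⟨z, hz, rfl⟩

lemma supNorm_le {f : ℂ → ℂ} {M : ℝ} (hM : ∀ z ∈ unitDisk, ‖f z‖ ≤ M) : supNorm f ≤ M :=
  csSup_le ⟨_, 0, mem_unitDisk.2 (by simp), rfl⟩ (by rintro _ ⟨z, hz, rfl⟩; exact hM z hz)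

lemma norm_const_add_mul_le (a b : ℂ) {z : ℂ} (hz : z ∈ unitDisk) :
    ‖a + b * z‖ ≤ ‖a‖ + ‖b‖ :=
  calc ‖a + b * z‖ ≤ ‖a‖ + ‖b‖ * ‖z‖ := (norm_add_le _ _).trans_eq (by rw [norm_mul])
    _ ≤ ‖a‖ + ‖b‖ := by
      gcongr
      exact mul_le_of_le_one_right (norm_nonneg b) (mem_unitDisk.1 hz).le

lemma bddAbove_norm_const_add_mul (a b : ℂ) :
    BddAbove ((fun z => ‖a + b * z‖) '' unitDisk) :=
  ⟨‖a‖ + ‖b‖, by rintro _ ⟨z, hz, rfl⟩; exact norm_const_add_mul_le a b hz⟩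

lemma exists_mem_unitDisk_norm_const_add_mul_eq (a b : ℂ) {t : ℝ} (ht₀ : 0 ≤ t) (ht₁ : t < 1) :
    ∃ z ∈ unitDisk, ‖a + b * z‖ = ‖a‖ + t * ‖b‖ := by
  obtain ⟨u, hu, hua⟩ : ∃ u : ℂ, ‖u‖ = 1 ∧ (‖a‖ : ℂ) = u * a := RCLike.exists_norm_eq_mul_self a
  obtain ⟨v, hv, hvb⟩ : ∃ v : ℂ, ‖v‖ = 1 ∧ (‖b‖ : ℂ) = v * b := RCLike.exists_norm_eq_mul_self b
  have hu₀ : u ≠ 0 := norm_ne_zero_iff.1 (hu ▸ one_ne_zero)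
  -- `z` rotates `b * z` onto the ray of `a`
  refine ⟨t * v / u, mem_unitDisk.2 (by simpa [hu, hv, abs_of_nonneg ht₀] using ht₁), ?_⟩
  have : a + b * (t * v / u) = ((‖a‖ + t * ‖b‖ : ℝ) : ℂ) / u := by
    push_cast
    rw [hua, hvb]
    field_simp
  rw [this, norm_div, hu, div_one, Complex.norm_of_nonneg (by positivity)]

lemma supNorm_const_add_mul (a b : ℂ) : supNorm (fun z => a + b * z) = ‖a‖ + ‖b‖ := by
  refine le_antisymm (supNorm_le fun z hz => norm_const_add_mul_le a b hz) ?_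
  have hlim : Tendsto (fun t : ℝ => ‖a‖ + t * ‖b‖) (nhdsWithin 1 (Set.Iio 1))
      (nhds (‖a‖ + ‖b‖)) := by
    refine ((by fun_prop : Continuous fun t : ℝ => ‖a‖ + t * ‖b‖).tendsto' 1 _ ?_).mono_left
      nhdsWithin_le_nhds
    rw [one_mul]
  refine le_of_tendsto hlim ?_
  filter_upwards [Ioo_mem_nhdsLT zero_lt_one] with t ht
  obtain ⟨z, hz, hnorm⟩ := exists_mem_unitDisk_norm_const_add_mul_eq a b ht.1.le ht.2
  exact hnorm ▸ norm_le_supNorm (bddAbove_norm_const_add_mul a b) hz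

lemma blochSemi_const_add_mul (a b : ℂ) (g : ℂ → ℂ) :
    blochSemi (fun z => a + b * g z) = ‖b‖ * blochSemi g := by
  simp only [blochSemi, deriv_const_add', deriv_const_mul_field', norm_mul]
  rw [← smul_eq_mul, ← Real.sSup_smul_of_nonneg (norm_nonneg b), ← Set.image_smul,
    Set.image_image]
  congr 2 with z
  simp only [smul_eq_mul]
  ring

lemma blochNorm_const_add_mul_comp (a b : ℂ) (φ : ℂ → ℂ) :
    blochNorm ((fun z => a + b * z) ∘ φ) = ‖a + b * φ 0‖ + ‖b‖ * blochSemi φ := by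
  rw [blochNorm, Function.comp_def, blochSemi_const_add_mul]

theorem stmt_7_general (φ : ℂ → ℂ)
    (hiso : ∀ f : ℂ → ℂ, DifferentiableOn ℂ f unitDisk →
      BddAbove ((fun z => ‖f z‖) '' unitDisk) →
      blochNorm (f ∘ φ) = supNorm f) :
    φ 0 = 0 := by
  have affine (a b : ℂ) : ‖a + b * φ 0‖ + ‖b‖ * blochSemi φ = ‖a‖ + ‖b‖ := by
    rw [← blochNorm_const_add_mul_comp, ← supNorm_const_add_mul]
    exact hiso _ (by fun_prop) (bddAbove_norm_const_add_mul a b)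
  have hzero := affine 0 1
  have hplus := affine 1 1
  have hminus := affine 1 (-1)
  simp only [zero_add, one_mul, neg_one_mul, norm_neg, norm_one, norm_zero, ← sub_eq_add_neg]
    at hzero hplus hminus
  have hpar := parallelogram_law_with_norm ℝ (1 : ℂ) (φ 0)
  rw [norm_one, show ‖1 + φ 0‖ = 1 + ‖φ 0‖ by linarith,
    show ‖1 - φ 0‖ = 1 + ‖φ 0‖ by linarith] at hpar
  exact norm_eq_zero.1 (by nlinarith [norm_nonneg (φ 0)])

theorem stmt_7 (φ : ℂ → ℂ) (hφ : DifferentiableOn ℂ φ unitDisk)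
    (hφm : Set.MapsTo φ unitDisk unitDisk)
    (hiso : ∀ f : ℂ → ℂ, DifferentiableOn ℂ f unitDisk →
      BddAbove ((fun z => ‖f z‖) '' unitDisk) →
      blochNorm (f ∘ φ) = supNorm f) :
    φ 0 = 0 :=
  stmt_7_general φ hiso
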